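/- For every finitely supported f : ℕ → ℂ: (T_{m₁^c→1}(Δ_{G₁^c}(T_{m₁^c→1}^{−1} f)))(n) = (e^{1/2} + e^{−1/2})·f(n) − f(n−1) − f(n+1) for every n ≥ 1, and (T_{m₁^c→1}(Δ_{G₁^c}(T_{m₁^c→1}^{−1} f)))(0) = e^{−1/2}·f(0) − f(1). Equivalently, on finitely supported functions, T_{m₁^c→1} ∘ Δ_{G₁^c} ∘ T_{m₁^c→1}^{−1} = Δ_ℕ + (1 − e^{1/2})·𝟙₀ + (e^{1/2} + e^{−1/2} − 2)·Id. -/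

import Mathlib

noncomputable section

open Complex

/-- The Laplacian of the weighted graph `(E, V, m)`. -/
def lap {V : Type*} (E : V → V → ℝ) (m : V → ℝ) (f : V → ℂ) : V → ℂ :=
  fun x => (1 / (m x : ℂ)) * ∑' y : V, ((E x y : ℝ) : ℂ) * (f x - f y)

/-- Edge weights of the cusp half-line: `E₁^c(n, n+1) = e^{−(2n+1)/2}`. -/
def e1C : ℕ → ℕ → ℝ := fun n k =>
  if k = n + 1 then Real.exp (-((2 * (n : ℝ) + 1) / 2))
  else if n = k + 1 then Real.exp (-((2 * (k : ℝ) + 1) / 2)) else 0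

/-- Weight of the cusp half-line: `m₁^c(n) = e^{−n}`. -/
def m1C : ℕ → ℝ := fun n => Real.exp (-(n : ℝ))

/-- The gauge transform `T_{m→m'} f = (x ↦ √(m(x)/m'(x))·f(x))`. -/
def Tw {V : Type*} (m m' : V → ℝ) (f : V → ℂ) : V → ℂ :=
  fun x => (Real.sqrt (m x / m' x) : ℂ) * f x

/-- `(Δ_ℕ f)(n) = 2f(n) − f(n−1) − f(n+1)` for `n ≥ 1`, `(Δ_ℕ f)(0) = f(0) − f(1)`. -/
def deltaN (f : ℕ → ℂ) : ℕ → ℂ := fun n =>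
  if n = 0 then f 0 - f 1 else 2 * f n - f (n - 1) - f (n + 1)

/-- `(𝟙₀ f)(n) = f(0)` if `n = 0`, and `0` otherwise. -/
def One0 (f : ℕ → ℂ) : ℕ → ℂ := fun n => if n = 0 then f 0 else 0

/-! When the edge weight of `{n, n+1}` is the geometric mean `√(m n · m (n+1))` of the vertex
weights, conjugating the Laplacian by `T_{m→1}` turns every off-diagonal entry into `-1` and
leaves on the diagonal the sum of `√(m k / m n)` over the neighbours `k` of `n`. For
`m n = e^{-n}` these ratios are `e^{1/2}` (towards `0`) and `e^{-1/2}` (away from `0`). -/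

def pathEdgeWeight (b : ℕ → ℝ) : ℕ → ℕ → ℝ := fun n k =>
  if k = n + 1 then b n else if n = k + 1 then b k else 0

theorem e1C_eq_pathEdgeWeight :
    e1C = pathEdgeWeight (fun n => Real.exp (-((2 * (n : ℝ) + 1) / 2))) := rfl

section PathGraph

variable (b m : ℕ → ℝ) (g : ℕ → ℂ)

theorem lap_pathEdgeWeight_zero :
    lap (pathEdgeWeight b) m g 0 = (1 / (m 0 : ℂ)) * ((b 0 : ℂ) * (g 0 - g 1)) := by
  unfold lap
  rw [tsum_eq_single 1 fun k hk => by simp [pathEdgeWeight, hk]]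
  simp [pathEdgeWeight]

theorem lap_pathEdgeWeight_succ (n : ℕ) :
    lap (pathEdgeWeight b) m g (n + 1) = (1 / (m (n + 1) : ℂ)) *
      ((b n : ℂ) * (g (n + 1) - g n) + (b (n + 1) : ℂ) * (g (n + 1) - g (n + 2))) := by
  unfold lap
  rw [tsum_eq_sum (s := {n, n + 2}) fun k hk => ?_, Finset.sum_pair (by omega)]
  · congr 1
    simp [pathEdgeWeight, show n ≠ n + 1 + 1 by omega]
  · simp only [Finset.mem_insert, Finset.mem_singleton, not_or] at hk
    simp [pathEdgeWeight, show k ≠ n + 2 from hk.2, show n ≠ k from fun h => hk.1 h.symm]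

end PathGraph

theorem gauge_edge_term_eq {a c : ℝ} (ha : 0 < a) (hc : 0 < c) (x y : ℂ) :
    (√a : ℂ) * (1 / (a : ℂ)) * ((√(a * c) : ℂ) * ((√(1 / a) : ℂ) * x - (√(1 / c) : ℂ) * y))
      = (√(c / a) : ℂ) * x - y := by
  have hsa : (√a : ℂ) ≠ 0 := by exact_mod_cast (Real.sqrt_pos.2 ha).ne'
  have hsc : (√c : ℂ) ≠ 0 := by exact_mod_cast (Real.sqrt_pos.2 hc).ne'
  have ha_sq : (a : ℂ) = (√a : ℂ) ^ 2 := by exact_mod_cast (Real.sq_sqrt ha.le).symm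
  rw [Real.sqrt_mul ha.le, Real.sqrt_div' _ ha.le, Real.sqrt_div' _ ha.le, Real.sqrt_div' _ hc.le,
    Real.sqrt_one]
  push_cast
  rw [ha_sq]
  field_simp

section GeometricMeanWeights

variable {b m : ℕ → ℝ} (f : ℕ → ℂ)

theorem Tw_lap_pathEdgeWeight_Tw_zero (hm : ∀ n, 0 < m n)
    (hb : ∀ n, b n = √(m n * m (n + 1))) :
    Tw m (fun _ => 1) (lap (pathEdgeWeight b) m (Tw (fun _ => 1) m f)) 0
      = (√(m 1 / m 0) : ℂ) * f 0 - f 1 := by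
  rw [Tw, lap_pathEdgeWeight_zero, ← mul_assoc, hb]
  simp only [Tw, div_one]
  exact gauge_edge_term_eq (hm 0) (hm 1) _ _

theorem Tw_lap_pathEdgeWeight_Tw_succ (hm : ∀ n, 0 < m n)
    (hb : ∀ n, b n = √(m n * m (n + 1))) (n : ℕ) :
    Tw m (fun _ => 1) (lap (pathEdgeWeight b) m (Tw (fun _ => 1) m f)) (n + 1)
      = ((√(m n / m (n + 1)) + √(m (n + 2) / m (n + 1)) : ℝ) : ℂ) * f (n + 1) - f n - f (n + 2) := by
  rw [Tw, lap_pathEdgeWeight_succ, ← mul_assoc, hb, hb, mul_comm (m n), mul_add]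
  simp only [Tw, div_one]
  rw [gauge_edge_term_eq (hm _) (hm _), gauge_edge_term_eq (hm _) (hm _)]
  push_cast
  ring

end GeometricMeanWeights

theorem m1C_pos (n : ℕ) : 0 < m1C n := Real.exp_pos _

theorem e1C_weight_eq_sqrt_m1C_mul (n : ℕ) :
    Real.exp (-((2 * (n : ℝ) + 1) / 2)) = √(m1C n * m1C (n + 1)) := by
  rw [m1C, m1C, ← Real.exp_add, ← Real.exp_half]
  push_cast
  ring_nf

theorem sqrt_m1C_div_m1C (j k : ℕ) : √(m1C j / m1C k) = Real.exp (((k : ℝ) - j) / 2) := by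
  rw [m1C, m1C, ← Real.exp_sub, ← Real.exp_half]
  ring_nf

theorem Tw_lap_e1C_Tw_zero (f : ℕ → ℂ) :
    Tw m1C (fun _ => 1) (lap e1C m1C (Tw (fun _ => 1) m1C f)) 0
      = ((Real.exp (-(1 / 2)) : ℝ) : ℂ) * f 0 - f 1 := by
  rw [e1C_eq_pathEdgeWeight, Tw_lap_pathEdgeWeight_Tw_zero f m1C_pos e1C_weight_eq_sqrt_m1C_mul,
    sqrt_m1C_div_m1C]
  norm_num

theorem Tw_lap_e1C_Tw_succ (f : ℕ → ℂ) (n : ℕ) :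
    Tw m1C (fun _ => 1) (lap e1C m1C (Tw (fun _ => 1) m1C f)) (n + 1)
      = ((Real.exp (1 / 2) + Real.exp (-(1 / 2)) : ℝ) : ℂ) * f (n + 1) - f n - f (n + 2) := by
  rw [e1C_eq_pathEdgeWeight, Tw_lap_pathEdgeWeight_Tw_succ f m1C_pos e1C_weight_eq_sqrt_m1C_mul,
    sqrt_m1C_div_m1C, sqrt_m1C_div_m1C]
  push_cast
  ring_nf

theorem stmt6_general (f : ℕ → ℂ) :
    (∀ n : ℕ, 1 ≤ n →
      Tw m1C (fun _ => 1) (lap e1C m1C (Tw (fun _ => 1) m1C f)) n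
        = ((Real.exp (1 / 2) + Real.exp (-(1 / 2)) : ℝ) : ℂ) * f n
            - f (n - 1) - f (n + 1)) ∧
    (Tw m1C (fun _ => 1) (lap e1C m1C (Tw (fun _ => 1) m1C f)) 0
        = ((Real.exp (-(1 / 2)) : ℝ) : ℂ) * f 0 - f 1) ∧
    (∀ n : ℕ,
      Tw m1C (fun _ => 1) (lap e1C m1C (Tw (fun _ => 1) m1C f)) n
        = deltaN f n + ((1 - Real.exp (1 / 2) : ℝ) : ℂ) * One0 f n
            + ((Real.exp (1 / 2) + Real.exp (-(1 / 2)) - 2 : ℝ) : ℂ) * f n) := by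
  refine ⟨fun n hn => ?_, Tw_lap_e1C_Tw_zero f, fun n => ?_⟩
  · obtain ⟨n, rfl⟩ := Nat.exists_eq_add_of_le' hn
    exact Tw_lap_e1C_Tw_succ f n
  · rcases n with _ | n
    · simp only [Tw_lap_e1C_Tw_zero, deltaN, One0, if_true]
      push_cast
      ring
    · simp only [Tw_lap_e1C_Tw_succ, deltaN, One0, Nat.add_one_ne_zero, if_false,
        Nat.add_sub_cancel]
      push_cast
      ring

/-- **Gauge transform of the cusp half-line Laplacian:**
`T_{m₁^c→1} ∘ Δ_{G₁^c} ∘ T_{m₁^c→1}⁻¹ = Δ_ℕ + (1 − e^{1/2})·𝟙₀ + (e^{1/2} + e^{−1/2} − 2)·Id`. -/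
theorem stmt6 (f : ℕ → ℂ) (hf : (Function.support f).Finite) :
    (∀ n : ℕ, 1 ≤ n →
      Tw m1C (fun _ => 1) (lap e1C m1C (Tw (fun _ => 1) m1C f)) n
        = ((Real.exp (1 / 2) + Real.exp (-(1 / 2)) : ℝ) : ℂ) * f n
            - f (n - 1) - f (n + 1)) ∧
    (Tw m1C (fun _ => 1) (lap e1C m1C (Tw (fun _ => 1) m1C f)) 0
        = ((Real.exp (-(1 / 2)) : ℝ) : ℂ) * f 0 - f 1) ∧
    (∀ n : ℕ,
      Tw m1C (fun _ => 1) (lap e1C m1C (Tw (fun _ => 1) m1C f)) n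
        = deltaN f n + ((1 - Real.exp (1 / 2) : ℝ) : ℂ) * One0 f n
            + ((Real.exp (1 / 2) + Real.exp (-(1 / 2)) - 2 : ℝ) : ℂ) * f n) :=
  stmt6_general f
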